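/- arXiv:2509.14073 — 2 statements merged into one kernel-verified Lean document; each statement's English description precedes it below -/
import Mathlib

section
/- For every τ > 0, Σ_{n=1}^∞ (−1)^{n−1} n sin(2πn/3) exp(−(2π/3) n² τ) = (3√6 / (8 τ^{3/2})) · Σ_{k∈ℤ} (k + 1/6) exp(−(3π/(2τ)) (k + 1/6)²), where the sum over ℤ converges absolutely. -/
/-!
Up to a factor `2`, `f τ` is the theta series `Σ_{n ∈ ℤ} n sin(2πan) exp(-πn²t)` with `a = 1/6`
and `t = 2τ/3`, because `(-1)^(n+1) sin(2πn/3) = sin(πn/3)`. This is Mathlib's `sinKernel a t`,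
and its transformation under `t ↦ 1/t` (Poisson summation, `oddKernel_functional_equation`) is
`(3/(2τ))^(3/2)` times the shifted sum `oddKernel a (3/(2τ)) = Σ_{k ∈ ℤ} (k + a) exp(-π(k + a)² · 3/(2τ))`.
-/

open Real Filter

/-- `f τ = Σ_{n=1}^∞ (−1)^{n−1} n sin(2πn/3) exp(−(2π/3) n² τ)`. The `n = 0` term vanishes,
and for `n ≥ 1` one has `(−1)^{n+1} = (−1)^{n−1}`. -/
noncomputable def f (τ : ℝ) : ℝ :=
  ∑' n : ℕ, (-1 : ℝ) ^ (n + 1) * n * Real.sin (2 * π * n / 3) * Real.exp (-(2 * π / 3) * n ^ 2 * τ)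

open HurwitzZeta

lemma neg_one_pow_succ_mul_sin_two_pi_mul_div_three (n : ℕ) :
    (-1 : ℝ) ^ (n + 1) * Real.sin (2 * π * n / 3) = Real.sin (2 * π * (1 / 6) * n) := by
  have h := Real.sin_nat_mul_pi_sub (π * n / 3) n
  rw [show (n : ℝ) * π - π * n / 3 = 2 * π * n / 3 by ring] at h
  rw [h, show 2 * π * (1 / 6) * n = π * n / 3 by ring, pow_succ]
  have : ((-1 : ℝ) ^ n) ^ 2 = 1 := by rw [← pow_mul, mul_comm, pow_mul, neg_one_sq, one_pow]
  linear_combination Real.sin (π * n / 3) * this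

lemma two_mul_f_eq_sinKernel {τ : ℝ} (hτ : 0 < τ) :
    2 * f τ = sinKernel (1 / 6 : ℝ) (2 * τ / 3) := by
  rw [f, ← tsum_mul_left, ← (hasSum_nat_sinKernel (1 / 6) (by positivity : 0 < 2 * τ / 3)).tsum_eq]
  congr 1 with n
  rw [← neg_one_pow_succ_mul_sin_two_pi_mul_div_three]
  ring_nf

lemma rpow_three_halves {x : ℝ} (hx : 0 ≤ x) : x ^ ((3 : ℝ) / 2) = x * √x := by
  rw [show (3 : ℝ) / 2 = 1 + 1 / 2 by norm_num, rpow_add' hx (by norm_num), rpow_one, sqrt_eq_rpow]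

lemma three_div_two_mul_rpow_three_halves {τ : ℝ} (hτ : 0 < τ) :
    (3 / (2 * τ)) ^ ((3 : ℝ) / 2) / 2 = 3 * √6 / (8 * τ ^ ((3 : ℝ) / 2)) := by
  have hsqrt : √(3 / (2 * τ)) = √6 / (2 * √τ) := by
    rw [show 3 / (2 * τ) = 6 / (2 ^ 2 * τ) by field_simp; ring, sqrt_div' _ (by positivity),
      sqrt_mul (by norm_num), sqrt_sq (by norm_num)]
  have := sqrt_pos.mpr hτ
  rw [rpow_three_halves (by positivity), rpow_three_halves hτ.le, hsqrt]
  field_simp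
  ring

/-- Poisson summation (theta transformation) of `f`: for every `τ > 0`,
`f(τ) = (3√6 / (8 τ^{3/2})) Σ_{k∈ℤ} (k + 1/6) exp(−(3π/(2τ)) (k + 1/6)²)`,
and the sum over `ℤ` converges absolutely. -/
theorem f_eq_open_channel_sum (τ : ℝ) (hτ : 0 < τ) :
    Summable (fun k : ℤ =>
      |((k : ℝ) + 1 / 6) * Real.exp (-(3 * π / (2 * τ)) * ((k : ℝ) + 1 / 6) ^ 2)|)
    ∧ f τ = 3 * Real.sqrt 6 / (8 * τ ^ ((3 : ℝ) / 2)) *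
        ∑' k : ℤ, ((k : ℝ) + 1 / 6) * Real.exp (-(3 * π / (2 * τ)) * ((k : ℝ) + 1 / 6) ^ 2) := by
  have hx : 0 < 3 / (2 * τ) := by positivity
  have hsum : HasSum (fun k : ℤ => ((k : ℝ) + 1 / 6) *
      Real.exp (-(3 * π / (2 * τ)) * ((k : ℝ) + 1 / 6) ^ 2)) (oddKernel (1 / 6 : ℝ) (3 / (2 * τ))) :=
    (hasSum_int_oddKernel (1 / 6) hx).congr_fun fun k => by ring_nf
  refine ⟨hsum.summable.abs, ?_⟩
  have hfe := oddKernel_functional_equation (1 / 6 : ℝ) (3 / (2 * τ))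
  rw [one_div_div, ← two_mul_f_eq_sinKernel hτ] at hfe
  rw [hsum.tsum_eq, hfe, ← three_div_two_mul_rpow_three_halves hτ]
  field_simp [(rpow_pos_of_pos hx _).ne']
end

section
/- For every real x, the complex-valued double integral ∫₀^∞ ∫₀^∞ L e^{−L} b^{ix} / (b + L)² db dL converges absolutely and equals π x Γ(1 + ix) / sinh(πx), where b^{ix} := exp(i x log b), Γ is the complex Gamma function, and for x = 0 the right-hand side is interpreted as its limit value 1. -/
/-!
Substituting `b = L t / (1 - t)` turns the inner integral `∫₀^∞ b^s / (b + L)² db` into the Beta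
integral `L^(s-1) B(1 + s, 1 - s) = L^(s-1) Γ(1 + s) Γ(1 - s)`. For `s = ix` the outer integral
`∫₀^∞ e^(-L) L^(ix) dL` is `Γ(1 + ix)`, and the reflection formula gives
`Γ(1 + ix) Γ(1 - ix) = πx / sinh(πx)`. Absolute convergence follows from Tonelli, since the inner
integral of the modulus is `L e^(-L) / L = e^(-L)`.
-/

open Real MeasureTheory Set Complex

noncomputable def scaledOdds (L t : ℝ) : ℝ := L * t / (1 - t)

lemma scaledOdds_add_self {L t : ℝ} (ht : t ≠ 1) : scaledOdds L t + L = L / (1 - t) := by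
  have : 1 - t ≠ 0 := sub_ne_zero.mpr (Ne.symm ht)
  rw [scaledOdds]
  field_simp
  ring

lemma image_scaledOdds_Ioo {L : ℝ} (hL : 0 < L) : scaledOdds L '' Ioo 0 1 = Ioi 0 := by
  ext b
  constructor
  · rintro ⟨t, ⟨ht0, ht1⟩, rfl⟩
    exact div_pos (mul_pos hL ht0) (sub_pos.mpr ht1)
  · intro (hb : 0 < b)
    have hbL : 0 < b + L := by linarith
    refine ⟨b / (b + L), ⟨by positivity, (div_lt_one hbL).mpr (by linarith)⟩, ?_⟩
    rw [scaledOdds, show 1 - b / (b + L) = L / (b + L) by field_simp; ring]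
    field_simp

lemma injOn_scaledOdds_Ioo {L : ℝ} (hL : 0 < L) : InjOn (scaledOdds L) (Ioo 0 1) := by
  rintro t₁ ⟨-, ht₁⟩ t₂ ⟨-, ht₂⟩ h
  rw [scaledOdds, scaledOdds, div_eq_div_iff (by linarith) (by linarith)] at h
  nlinarith

lemma hasDerivAt_scaledOdds (L : ℝ) {t : ℝ} (ht : t ≠ 1) :
    HasDerivAt (scaledOdds L) (L / (1 - t) ^ 2) t := by
  have h := ((hasDerivAt_id' t).const_mul L).div ((hasDerivAt_id' t).const_sub 1)
    (sub_ne_zero.mpr (Ne.symm ht))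
  rwa [show L * 1 * (1 - t) - L * t * -1 = L by ring] at h

section Substitution

variable {E : Type*} [NormedAddCommGroup E] [NormedSpace ℝ E] {L : ℝ}

lemma abs_deriv_scaledOdds (hL : 0 < L) (t : ℝ) : |L / (1 - t) ^ 2| = L / (1 - t) ^ 2 :=
  abs_of_nonneg (by positivity)

theorem integrableOn_Ioi_iff_scaledOdds (hL : 0 < L) (f : ℝ → E) :
    IntegrableOn f (Ioi 0) ↔
      IntegrableOn (fun t => (L / (1 - t) ^ 2) • f (scaledOdds L t)) (Ioo 0 1) := by
  rw [← image_scaledOdds_Ioo hL, integrableOn_image_iff_integrableOn_abs_deriv_smul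
    measurableSet_Ioo (fun t ht => (hasDerivAt_scaledOdds L ht.2.ne).hasDerivWithinAt)
    (injOn_scaledOdds_Ioo hL)]
  simp_rw [abs_deriv_scaledOdds hL]

theorem integral_Ioi_eq_scaledOdds (hL : 0 < L) (f : ℝ → E) :
    ∫ b in Ioi 0, f b = ∫ t in Ioo 0 1, (L / (1 - t) ^ 2) • f (scaledOdds L t) := by
  rw [← image_scaledOdds_Ioo hL, integral_image_eq_integral_abs_deriv_smul
    measurableSet_Ioo (fun t ht => (hasDerivAt_scaledOdds L ht.2.ne).hasDerivWithinAt)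
    (injOn_scaledOdds_Ioo hL)]
  simp_rw [abs_deriv_scaledOdds hL]

end Substitution

lemma integrableOn_Ioo_betaIntegrand {u v : ℂ} (hu : 0 < u.re) (hv : 0 < v.re) :
    IntegrableOn (fun t : ℝ => (t : ℂ) ^ (u - 1) * (1 - (t : ℂ)) ^ (v - 1)) (Ioo 0 1) :=
  (betaIntegral_convergent hu hv).1.mono_set Ioo_subset_Ioc_self

lemma betaIntegral_eq_setIntegral_Ioo (u v : ℂ) :
    betaIntegral u v = ∫ t in Ioo (0 : ℝ) 1, (t : ℂ) ^ (u - 1) * (1 - (t : ℂ)) ^ (v - 1) := by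
  rw [betaIntegral, intervalIntegral.integral_of_le zero_le_one, integral_Ioc_eq_integral_Ioo]

lemma eqOn_smul_scaledOdds_cpow_div_add_sq {L : ℝ} (hL : 0 < L) (s : ℂ) :
    EqOn
      (fun t => (L / (1 - t) ^ 2) • ((scaledOdds L t : ℂ) ^ s / ((scaledOdds L t : ℂ) + L) ^ 2))
      (fun t : ℝ => (L : ℂ) ^ (s - 1) * ((t : ℂ) ^ (1 + s - 1) * (1 - (t : ℂ)) ^ (1 - s - 1)))
      (Ioo 0 1) := by
  rintro t ⟨ht0, ht1⟩
  have h1t : 0 < 1 - t := sub_pos.mpr ht1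
  have hsum : (scaledOdds L t : ℂ) + L = L / (1 - t : ℝ) := by
    rw [← ofReal_add, scaledOdds_add_self ht1.ne, ofReal_div]
  have hpow : (scaledOdds L t : ℂ) ^ s = (L : ℂ) ^ s * (t : ℂ) ^ s / ((1 - t : ℝ) : ℂ) ^ s := by
    rw [scaledOdds, ofReal_div, div_cpow_ofReal_nonneg (by positivity) h1t.le, ofReal_mul,
      mul_cpow_ofReal_nonneg hL.le ht0.le]
  have hL' : (L : ℂ) ≠ 0 := ofReal_ne_zero.mpr hL.ne'
  have h1t' : ((1 - t : ℝ) : ℂ) ≠ 0 := ofReal_ne_zero.mpr h1t.ne'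
  have h1ts : ((1 - t : ℝ) : ℂ) ^ s ≠ 0 := cpow_ne_zero_iff.mpr (.inl h1t')
  simp only
  rw [hsum, hpow, show 1 + s - 1 = s by ring, show 1 - s - 1 = -s by ring, cpow_neg,
    cpow_sub _ _ hL', cpow_one, real_smul, ← ofReal_one, ← ofReal_sub, ofReal_div, ofReal_pow]
  field_simp

section CpowDivAddSq

variable {s : ℂ} {L : ℝ}

theorem integrableOn_Ioi_cpow_div_add_sq (hs₀ : -1 < s.re) (hs₁ : s.re < 1) (hL : 0 < L) :
    IntegrableOn (fun b : ℝ => (b : ℂ) ^ s / ((b : ℂ) + L) ^ 2) (Ioi 0) := by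
  rw [integrableOn_Ioi_iff_scaledOdds hL]
  refine IntegrableOn.congr_fun (Integrable.const_mul ?_ _)
    (eqOn_smul_scaledOdds_cpow_div_add_sq hL s).symm measurableSet_Ioo
  exact integrableOn_Ioo_betaIntegrand (by simp; linarith) (by simp; linarith)

theorem integral_Ioi_cpow_div_add_sq (hs₀ : -1 < s.re) (hs₁ : s.re < 1) (hL : 0 < L) :
    ∫ b in Ioi (0 : ℝ), (b : ℂ) ^ s / ((b : ℂ) + L) ^ 2
      = (L : ℂ) ^ (s - 1) * (Gamma (1 + s) * Gamma (1 - s)) := by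
  have hGamma : Gamma (1 + s) * Gamma (1 - s) = betaIntegral (1 + s) (1 - s) := by
    rw [Gamma_mul_Gamma_eq_betaIntegral (by simp; linarith) (by simp; linarith),
      show 1 + s + (1 - s) = 2 by ring]
    simp
  rw [integral_Ioi_eq_scaledOdds hL,
    setIntegral_congr_fun measurableSet_Ioo (eqOn_smul_scaledOdds_cpow_div_add_sq hL s),
    integral_const_mul, hGamma, betaIntegral_eq_setIntegral_Ioo]

end CpowDivAddSq

lemma integral_Ioi_inv_add_sq {L : ℝ} (hL : 0 < L) :
    ∫ b in Ioi (0 : ℝ), ((b + L) ^ 2)⁻¹ = L⁻¹ := by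
  have hderiv : ∀ b ∈ Ici (0 : ℝ), HasDerivAt (fun b => -(b + L)⁻¹) ((b + L) ^ 2)⁻¹ b := by
    intro b (hb : 0 ≤ b)
    have h := (((hasDerivAt_id' b).add_const L).inv (by positivity)).neg
    rwa [neg_div, neg_neg, one_div] at h
  have hpos : ∀ b ∈ Ioi (0 : ℝ), 0 ≤ ((b + L) ^ 2)⁻¹ := fun b _ => by positivity
  have hlim : Filter.Tendsto (fun b => -(b + L)⁻¹) Filter.atTop (nhds 0) := by
    simpa using (tendsto_inv_atTop_zero.comp (Filter.tendsto_atTop_add_const_right _ L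
      Filter.tendsto_id)).neg
  rw [integral_Ioi_of_hasDerivAt_of_nonneg' hderiv hpos hlim]
  simp

lemma ofReal_cpow_of_pos {b : ℝ} (hb : 0 < b) (s : ℂ) :
    (b : ℂ) ^ s = Complex.exp (s * Real.log b) := by
  rw [cpow_def_of_ne_zero (ofReal_ne_zero.mpr hb.ne'), ← ofReal_log hb.le, mul_comm]

lemma Gamma_one_add_mul_Gamma_one_sub {s : ℂ} (hs : s ≠ 0) :
    Gamma (1 + s) * Gamma (1 - s) = π * s / Complex.sin (π * s) := by
  rw [add_comm, Gamma_add_one s hs, mul_assoc, Complex.Gamma_mul_Gamma_one_sub, mul_div_assoc']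
  ring

lemma Gamma_one_add_I_mul_mul_Gamma_one_sub {x : ℝ} (hx : x ≠ 0) :
    Gamma (1 + I * x) * Gamma (1 - I * x) = π * x / (Real.sinh (π * x) : ℂ) := by
  have hsinh : (Real.sinh (π * x) : ℂ) ≠ 0 :=
    ofReal_ne_zero.mpr (Real.sinh_ne_zero.mpr (mul_ne_zero Real.pi_ne_zero hx))
  rw [Gamma_one_add_mul_Gamma_one_sub (mul_ne_zero I_ne_zero (ofReal_ne_zero.mpr hx)),
    show (π : ℂ) * (I * x) = (π * x : ℝ) * I by push_cast; ring, sin_mul_I, ofReal_sinh]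
  field_simp
  push_cast
  ring

noncomputable def momentIntegrand (x : ℝ) (p : ℝ × ℝ) : ℂ :=
  (p.1 : ℂ) * Complex.exp (-(p.1 : ℂ)) * Complex.exp (I * x * Real.log p.2)
    / ((p.2 : ℂ) + (p.1 : ℂ)) ^ 2

section MomentIntegrand

variable (x : ℝ)

lemma measurable_momentIntegrand : Measurable (momentIntegrand x) := by
  unfold momentIntegrand
  fun_prop

lemma eqOn_momentIntegrand (L : ℝ) :
    EqOn (fun b => momentIntegrand x (L, b))
      (fun b : ℝ => (L * Complex.exp (-L)) * ((b : ℂ) ^ (I * x) / ((b : ℂ) + L) ^ 2)) (Ioi 0) := by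
  intro b (hb : 0 < b)
  simp only [momentIntegrand, ofReal_cpow_of_pos hb]
  ring

lemma norm_momentIntegrand {L b : ℝ} (hL : 0 < L) (hb : 0 < b) :
    ‖momentIntegrand x (L, b)‖ = L * Real.exp (-L) * ((b + L) ^ 2)⁻¹ := by
  rw [show momentIntegrand x (L, b) = _ from eqOn_momentIntegrand x L hb, norm_mul, norm_div,
    norm_pow, norm_mul, norm_cpow_eq_rpow_re_of_pos hb, ← ofReal_add, ← ofReal_neg,
    norm_exp_ofReal, norm_real, norm_real, Real.norm_of_nonneg hL.le,
    Real.norm_of_nonneg (by positivity)]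
  simp [div_eq_mul_inv]

theorem integrableOn_momentIntegrand :
    IntegrableOn (momentIntegrand x) (Ioi 0 ×ˢ Ioi 0) := by
  rw [IntegrableOn, Measure.volume_eq_prod, ← Measure.prod_restrict,
    integrable_prod_iff (measurable_momentIntegrand x).aestronglyMeasurable]
  constructor
  · filter_upwards [ae_restrict_mem measurableSet_Ioi] with L (hL : 0 < L)
    have hI := integrableOn_Ioi_cpow_div_add_sq (s := I * x) (by simp) (by simp) hL
    exact IntegrableOn.congr_fun (hI.const_mul _) (eqOn_momentIntegrand x L).symm
      measurableSet_Ioi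
  · refine (exp_neg_integrableOn_Ioi 0 one_pos).congr_fun (fun L (hL : 0 < L) => ?_)
      measurableSet_Ioi
    rw [setIntegral_congr_fun measurableSet_Ioi fun b hb => norm_momentIntegrand x hL hb,
      integral_const_mul, integral_Ioi_inv_add_sq hL]
    field_simp

theorem integral_momentIntegrand :
    ∫ p in Ioi 0 ×ˢ Ioi 0, momentIntegrand x p
      = Gamma (1 + I * x) * Gamma (1 - I * x) * Gamma (1 + I * x) := by
  have hslice : ∀ L ∈ Ioi (0 : ℝ), ∫ b in Ioi 0, momentIntegrand x (L, b)
      = Gamma (1 + I * x) * Gamma (1 - I * x) * (Real.exp (-L) * (L : ℂ) ^ (1 + I * x - 1)) := by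
    intro L (hL : 0 < L)
    have hL' : (L : ℂ) ≠ 0 := ofReal_ne_zero.mpr hL.ne'
    rw [setIntegral_congr_fun measurableSet_Ioi (eqOn_momentIntegrand x L), integral_const_mul,
      integral_Ioi_cpow_div_add_sq (s := I * x) (by simp) (by simp) hL,
      cpow_sub _ _ hL', add_sub_cancel_left, cpow_one, ofReal_exp, ofReal_neg]
    field_simp
  have hF := integrableOn_momentIntegrand x
  rw [IntegrableOn, Measure.volume_eq_prod, ← Measure.prod_restrict] at hF
  rw [Measure.volume_eq_prod, ← Measure.prod_restrict, integral_prod _ hF,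
    setIntegral_congr_fun measurableSet_Ioi hslice, integral_const_mul,
    Complex.Gamma_eq_integral (by simp), GammaIntegral]

end MomentIntegrand

/-- Joint boundary-length moment computation: for every real `x`, the complex-valued double
integral `∫₀^∞ ∫₀^∞ L e^{−L} b^{ix}/(b+L)² db dL` (with `b^{ix} := exp(ix log b)`) converges
absolutely and equals `πx Γ(1+ix)/sinh(πx)`, where for `x = 0` the right-hand side is
interpreted as its limit value `1`. The outer variable is `L = p.1` and the inner is `b = p.2`. -/
theorem double_integral_moment (x : ℝ) :
    IntegrableOn
      (fun p : ℝ × ℝ =>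
        (p.1 : ℂ) * Complex.exp (-(p.1 : ℂ)) * Complex.exp (Complex.I * x * Real.log p.2)
          / ((p.2 : ℂ) + (p.1 : ℂ)) ^ 2)
      (Ioi (0 : ℝ) ×ˢ Ioi (0 : ℝ))
    ∧ ∫ p in Ioi (0 : ℝ) ×ˢ Ioi (0 : ℝ),
        (p.1 : ℂ) * Complex.exp (-(p.1 : ℂ)) * Complex.exp (Complex.I * x * Real.log p.2)
          / ((p.2 : ℂ) + (p.1 : ℂ)) ^ 2
        = if x = 0 then 1
          else ((π : ℂ) * (x : ℂ) * Complex.Gamma (1 + Complex.I * x))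
            / ((Real.sinh (π * x) : ℝ) : ℂ) := by
  refine ⟨integrableOn_momentIntegrand x, ?_⟩
  change ∫ p in Ioi 0 ×ˢ Ioi 0, momentIntegrand x p = _
  rw [integral_momentIntegrand]
  split_ifs with hx
  · simp [hx]
  · rw [Gamma_one_add_I_mul_mul_Gamma_one_sub hx]
    ring
end
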